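/- arXiv:2310.11251 — 5 statements merged into one kernel-verified Lean document; each statement's English description precedes it below -/
import Mathlib

section
/- The Hall gap-distribution function H satisfies lim_{s→∞} s²·H(s) = 18/π⁴. -/
open Filter

/-- The function `F` appearing in Hall's gap distribution. -/
noncomputable def Fhall (t : ℝ) : ℝ :=
  if 1 ≤ t then 1
  else if 1/4 ≤ t then -1 + 2*t - 2*t*Real.log t
  else -1 + 2*t + 2*Real.sqrt (1/4 - t) - 4*t*Real.log (1/2 + Real.sqrt (1/4 - t))

/-- The Hall gap distribution. -/
noncomputable def Hhall (s : ℝ) : ℝ := Fhall (3 / (Real.pi ^ 2 * s))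

noncomputable def ghall (v : ℝ) : ℝ :=
  (-2 + 4*(v+1/2) * (Real.log (v+1/2) / (v-1/2))) / (v+1/2)^2

lemma slope_log_half :
    Tendsto (fun v : ℝ => Real.log (v+1/2) / (v-1/2)) (nhdsWithin (1/2:ℝ) {(1/2:ℝ)}ᶜ) (nhds 1) := by
  have h := Real.hasDerivAt_log (one_ne_zero)
  rw [hasDerivAt_iff_tendsto_slope] at h
  have hshift : Tendsto (fun v : ℝ => v + 1/2) (nhdsWithin (1/2:ℝ) {(1/2:ℝ)}ᶜ)
      (nhdsWithin (1:ℝ) {(1:ℝ)}ᶜ) := by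
    rw [nhdsWithin, nhdsWithin]
    refine Tendsto.inf ?_ ?_
    · have : Tendsto (fun v : ℝ => v + 1/2) (nhds (1/2:ℝ)) (nhds ((1/2:ℝ)+1/2)) :=
        (continuous_id.add continuous_const).tendsto _
      norm_num at this
      exact this
    · rw [tendsto_principal_principal]
      intro v hv
      simp only [Set.mem_compl_iff, Set.mem_singleton_iff] at hv ⊢
      intro hc; apply hv; linarith
  have h2 := h.comp hshift
  simp only [inv_one] at h2
  refine h2.congr ?_
  intro v
  simp only [Function.comp_apply, slope_def_field, Real.log_one]
  ring_nf

lemma ghall_tendsto : Tendsto ghall (nhdsWithin (1/2:ℝ) {(1/2:ℝ)}ᶜ) (nhds 2) := by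
  have hv : Tendsto (fun v : ℝ => v) (nhdsWithin (1/2:ℝ) {(1/2:ℝ)}ᶜ) (nhds (1/2:ℝ)) :=
    tendsto_id.mono_left nhdsWithin_le_nhds
  have hnum : Tendsto (fun v : ℝ => -2 + 4*(v+1/2) * (Real.log (v+1/2) / (v-1/2)))
      (nhdsWithin (1/2:ℝ) {(1/2:ℝ)}ᶜ) (nhds (-2 + 4*((1/2:ℝ)+1/2) * 1)) := by
    exact tendsto_const_nhds.add (((hv.add tendsto_const_nhds).const_mul 4).mul slope_log_half)
  have hden : Tendsto (fun v : ℝ => (v+1/2)^2) (nhdsWithin (1/2:ℝ) {(1/2:ℝ)}ᶜ)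
      (nhds (((1/2:ℝ)+1/2)^2)) := (hv.add tendsto_const_nhds).pow 2
  have := hnum.div hden (by norm_num)
  norm_num at this
  exact this

lemma Fhall_div_sq : Tendsto (fun t : ℝ => Fhall t / t^2) (nhdsWithin (0:ℝ) (Set.Ioi 0)) (nhds 2) := by
  have hu : Tendsto (fun t : ℝ => Real.sqrt (1/4 - t)) (nhdsWithin (0:ℝ) (Set.Ioi 0))
      (nhdsWithin (1/2:ℝ) {(1/2:ℝ)}ᶜ) := by
    rw [tendsto_nhdsWithin_iff]
    constructor
    · have hT : Tendsto (fun t : ℝ => Real.sqrt (1/4 - t)) (nhds (0:ℝ)) (nhds (Real.sqrt (1/4 - 0))) :=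
        (Real.continuous_sqrt.comp (continuous_const.sub continuous_id)).tendsto _
      have hval : Real.sqrt ((1:ℝ)/4 - 0) = 1/2 := by
        rw [sub_zero, show (1/4 : ℝ) = (1/2)^2 by norm_num, Real.sqrt_sq (by norm_num)]
      rw [hval] at hT
      exact hT.mono_left nhdsWithin_le_nhds
    · filter_upwards [self_mem_nhdsWithin] with t ht
      simp only [Set.mem_Ioi] at ht
      simp only [Set.mem_compl_iff, Set.mem_singleton_iff]
      have : Real.sqrt (1/4 - t) < 1/2 := by
        rw [Real.sqrt_lt' (by norm_num)]
        nlinarith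
      linarith
  have heq : ∀ᶠ t in nhdsWithin (0:ℝ) (Set.Ioi 0),
      ghall (Real.sqrt (1/4 - t)) = Fhall t / t^2 := by
    filter_upwards [Ioo_mem_nhdsGT_of_mem (by norm_num : (0:ℝ) ∈ Set.Ico 0 (1/4))] with t ht
    obtain ⟨ht0, ht4⟩ := ht
    have hFt : Fhall t = -1 + 2*t + 2*Real.sqrt (1/4 - t)
        - 4*t*Real.log (1/2 + Real.sqrt (1/4 - t)) := by
      rw [Fhall, if_neg (by linarith), if_neg (by linarith)]
    set u := Real.sqrt (1/4 - t) with hu_def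
    have hu2 : u^2 = 1/4 - t := Real.sq_sqrt (by linarith)
    have hunn : 0 ≤ u := Real.sqrt_nonneg _
    have hult : u < 1/2 := by
      rw [hu_def, Real.sqrt_lt' (by norm_num)]; nlinarith
    have h1 : u - 1/2 ≠ 0 := by intro h; linarith
    have h2 : u + 1/2 ≠ 0 := by positivity
    have ht' : t = 1/4 - u^2 := by rw [hu2]; ring
    have htne : (1/4 : ℝ) - u^2 ≠ 0 := by rw [← ht']; linarith
    rw [hFt, ghall, ht', show (1/2 : ℝ) + u = u + 1/2 by ring]
    have h3 : ((1:ℝ)/4 - u^2)^2 ≠ 0 := pow_ne_zero _ htne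
    have h4 : ((u:ℝ) + 1/2)^2 ≠ 0 := pow_ne_zero _ h2
    rw [div_eq_div_iff h4 h3]
    set q : ℝ := Real.log (u + 1/2) / (u - 1/2) with hq_def
    have hL : Real.log (u + 1/2) = q * (u - 1/2) := by
      rw [hq_def, div_mul_cancel₀ _ h1]
    rw [hL]
    ring
  have := (ghall_tendsto.comp hu).congr' heq
  exact this

theorem stmt5 :
    Tendsto (fun s : ℝ => s ^ 2 * Hhall s) atTop (nhds (18 / Real.pi ^ 4)) := by
  have hpi : (0:ℝ) < Real.pi := Real.pi_pos
  have hcomp : Tendsto (fun s : ℝ => 3 / (Real.pi ^ 2 * s)) atTop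
      (nhdsWithin (0:ℝ) (Set.Ioi 0)) := by
    rw [tendsto_nhdsWithin_iff]
    constructor
    · have h1 : Tendsto (fun s : ℝ => (3 / Real.pi ^ 2) * s⁻¹) atTop (nhds ((3/Real.pi^2) * 0)) :=
        tendsto_inv_atTop_zero.const_mul _
      rw [mul_zero] at h1
      refine h1.congr fun s => ?_
      field_simp
    · filter_upwards [eventually_gt_atTop 0] with s hs
      simp only [Set.mem_Ioi]
      positivity
  have h2 := (Fhall_div_sq.comp hcomp).const_mul (9 / Real.pi ^ 4)
  have heq : ∀ᶠ s in atTop, (9 / Real.pi ^ 4) *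
      ((fun t : ℝ => Fhall t / t^2) ∘ (fun s : ℝ => 3 / (Real.pi ^ 2 * s))) s
      = s ^ 2 * Hhall s := by
    filter_upwards [eventually_gt_atTop 0] with s hs
    simp only [Function.comp_apply, Hhall]
    have hsne : s ≠ 0 := ne_of_gt hs
    have hpne : Real.pi ≠ 0 := ne_of_gt hpi
    field_simp
    ring
  have h3 := h2.congr' heq
  have : (9 / Real.pi ^ 4) * 2 = 18 / Real.pi ^ 4 := by ring
  rwa [this] at h3
end

section
/- Let n ≥ 1 and let A ⊆ ℝⁿ be bounded with non-empty interior. Then there exist constants C > 0 and L₀ > 0 such that for all δ ∈ (0,1) and all L ∈ (0, L₀], the Lebesgue measure of { x ∈ [0,1]ⁿ : δ^{n/(n+1)}·q_min(x,δ,A) ≤ L } is at most C·L^{n+1}. -/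
open MeasureTheory Set Pointwise ENNReal

/-- The smallest denominator `q ≥ 1` of a rational point `p/q ∈ x + δ • A`. -/
noncomputable def qminN {n : ℕ} (x : Fin n → ℝ) (δ : ℝ) (A : Set (Fin n → ℝ)) : ℕ :=
  sInf {q : ℕ | 0 < q ∧ ∃ p : Fin n → ℤ, ∃ a ∈ A,
    ∀ i, (p i : ℝ) / (q : ℝ) = x i + δ * a i}

set_option maxHeartbeats 2000000 in
theorem stmt9 (n : ℕ) (hn : 1 ≤ n) (A : Set (Fin n → ℝ))
    (hA : Bornology.IsBounded A) (hAint : (interior A).Nonempty) :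
    ∃ C > 0, ∃ L₀ > 0, ∀ δ : ℝ, δ ∈ Ioo (0:ℝ) 1 → ∀ L : ℝ, L ∈ Ioc (0:ℝ) L₀ →
      (volume {x : Fin n → ℝ | x ∈ Icc 0 1 ∧
          δ ^ ((n : ℝ)/(n + 1)) * (qminN x δ A : ℝ) ≤ L}).toReal
        ≤ C * L ^ (n + 1) := by
  obtain ⟨a₀, ha₀⟩ := hAint
  obtain ⟨ε, hε, hball⟩ := Metric.isOpen_iff.1 isOpen_interior a₀ ha₀
  have hballA : Metric.ball a₀ ε ⊆ A := hball.trans interior_subset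
  obtain ⟨R₀, hR₀⟩ := isBounded_iff_forall_norm_le.mp hA
  set R : ℝ := max R₀ 0 with hRdef
  have hR : ∀ a ∈ A, ‖a‖ ≤ R := fun a ha => (hR₀ a ha).trans (le_max_left _ _)
  have hR0 : (0:ℝ) ≤ R := le_max_right _ _
  obtain ⟨M, hRM⟩ : ∃ M : ℕ, 1 + R ≤ (M : ℝ) :=
    ⟨⌈R⌉₊ + 1, by push_cast; linarith [Nat.le_ceil R]⟩
  have hvA : volume A < ⊤ := hA.measure_lt_top
  set vA : ℝ := (volume A).toReal with hvAdef
  have hvA0 : 0 ≤ vA := ENNReal.toReal_nonneg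
  refine ⟨(2*M+1)^n * (vA + 1), by positivity, 1, one_pos, ?_⟩
  rintro δ ⟨hδ0, hδ1⟩ L ⟨hL0, hL1⟩
  set e : ℝ := (n:ℝ)/((n:ℝ)+1) with hedef
  have hepos : 0 < δ ^ e := Real.rpow_pos_of_pos hδ0 _
  -- the defining set of qminN is nonempty for every x
  have hNE : ∀ x : Fin n → ℝ, ({q : ℕ | 0 < q ∧ ∃ p : Fin n → ℤ, ∃ a ∈ A,
      ∀ i, (p i : ℝ) / (q : ℝ) = x i + δ * a i}).Nonempty := by
    intro x
    obtain ⟨q, hq⟩ := exists_nat_gt (1/(δ*ε))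
    have hq0 : 0 < q := by
      have h1 : (0:ℝ) < 1/(δ*ε) := by positivity
      exact_mod_cast (Nat.cast_pos (α := ℝ)).1 (h1.trans hq)
    have hq0' : (0:ℝ) < q := by exact_mod_cast hq0
    have hq' : 1/(q:ℝ) < δ*ε := by
      rw [div_lt_iff₀ hq0']
      have := (div_lt_iff₀ (by positivity : (0:ℝ) < δ*ε)).1 hq
      linarith
    set p : Fin n → ℤ := fun i => ⌊(q:ℝ) * (x i + δ * a₀ i)⌋ with hpdef
    set a : Fin n → ℝ := fun i => ((p i:ℝ)/(q:ℝ) - x i)/δ with hadef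
    have heq : ∀ i, (p i:ℝ)/q = x i + δ * a i := by
      intro i
      simp only [hadef]
      rw [mul_div_cancel₀ _ (ne_of_gt hδ0)]
      ring
    refine ⟨q, hq0, p, a, hballA ?_, heq⟩
    rw [Metric.mem_ball]
    refine (dist_pi_lt_iff hε).2 fun i => ?_
    rw [Real.dist_eq]
    set y : ℝ := (q:ℝ) * (x i + δ * a₀ i) with hydef
    have hfl1 : (p i : ℝ) ≤ y := Int.floor_le y
    have hfl2 : y - 1 < (p i : ℝ) := Int.sub_one_lt_floor y
    have hrepr : (p i : ℝ)/q - (x i + δ * a₀ i) = ((p i:ℝ) - y)/q := by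
      rw [hydef]; field_simp
    have habs : |(p i:ℝ) - y| < 1 := by
      rw [abs_lt]; constructor <;> linarith
    have hstep : |(p i:ℝ)/q - (x i + δ * a₀ i)| < 1/q := by
      rw [hrepr, abs_div, abs_of_pos hq0']
      gcongr
    have hform : a i - a₀ i = ((p i:ℝ)/q - (x i + δ * a₀ i))/δ := by
      simp only [hadef]
      field_simp
      ring
    rw [hform, abs_div, abs_of_pos hδ0, div_lt_iff₀ hδ0]
    calc |(p i:ℝ)/q - (x i + δ * a₀ i)| < 1/q := hstep
      _ < δ * ε := hq'
      _ = ε * δ := by ring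
  -- main counting argument
  set S : Set (Fin n → ℝ) := {x | x ∈ Icc 0 1 ∧ δ ^ e * (qminN x δ A : ℝ) ≤ L} with hSdef
  set Q : ℕ := ⌊L / δ ^ e⌋₊ with hQdef
  set T : ℕ → (Fin n → ℤ) → Set (Fin n → ℝ) :=
    fun q p => (fun i => (p i:ℝ)/(q:ℝ)) +ᵥ ((-δ) • A) with hTdef
  set P : ℕ → Finset (Fin n → ℤ) :=
    fun q => Fintype.piFinset (fun _ : Fin n => Finset.Icc (-(q*M : ℤ)) (q*M)) with hPdef
  have hsub : S ⊆ ⋃ q ∈ Finset.Icc 1 Q, ⋃ p ∈ P q, T q p := by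
    rintro x ⟨hx1, hx2⟩
    have hmem : qminN x δ A ∈ {q : ℕ | 0 < q ∧ ∃ p : Fin n → ℤ, ∃ a ∈ A,
        ∀ i, (p i : ℝ) / (q : ℝ) = x i + δ * a i} := Nat.sInf_mem (hNE x)
    obtain ⟨hq0, p, a, haA, heq⟩ := hmem
    set q := qminN x δ A with hqdef
    have hq0' : (0:ℝ) < q := by exact_mod_cast hq0
    have hqQ : q ≤ Q := by
      refine Nat.le_floor ?_
      rw [le_div_iff₀ hepos]
      linarith [hx2]
    refine Set.mem_biUnion (Finset.mem_Icc.2 ⟨hq0, hqQ⟩) ?_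
    have hpP : p ∈ P q := by
      refine Fintype.mem_piFinset.2 fun i => ?_
      have hxi1 : 0 ≤ x i := by
        have := hx1.1 i; simpa using this
      have hxi2 : x i ≤ 1 := by
        have := hx1.2 i; simpa using this
      have hai : |a i| ≤ R := by
        have h1 : ‖a i‖ ≤ ‖a‖ := norm_le_pi_norm a i
        rw [Real.norm_eq_abs] at h1
        exact h1.trans (hR a haA)
      have hpi : (p i : ℝ) = q * (x i + δ * a i) := by
        have h := heq i
        field_simp at h
        linarith [h]
      have habs : |(p i : ℝ)| ≤ (q:ℝ) * M := by
        rw [hpi, abs_mul, abs_of_pos hq0']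
        have h2 : |x i + δ * a i| ≤ 1 + R := by
          have h3 : |δ * a i| ≤ R := by
            rw [abs_mul, abs_of_pos hδ0]
            nlinarith [abs_nonneg (a i)]
          calc |x i + δ * a i| ≤ |x i| + |δ * a i| := abs_add_le _ _
            _ ≤ 1 + R := by
              rw [abs_of_nonneg hxi1]; linarith
        have := h2.trans hRM
        nlinarith
      have hint : |p i| ≤ (q:ℤ) * M := by
        have : |(p i : ℝ)| ≤ ((q*M : ℤ) : ℝ) := by push_cast; linarith [habs]
        exact_mod_cast (by rwa [← Int.cast_abs] at this : ((|p i| : ℤ) : ℝ) ≤ ((q*M:ℤ):ℝ))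
      simp only [Finset.mem_Icc]
      exact abs_le.1 hint
    refine Set.mem_biUnion hpP ?_
    · rw [Set.mem_vadd_set]
      refine ⟨(-δ) • a, smul_mem_smul_set haA, ?_⟩
      funext i
      have hi := heq i
      show ((p i:ℝ)/(q:ℝ)) + ((-δ) • a) i = x i
      simp only [Pi.smul_apply, smul_eq_mul, neg_mul]
      linarith [hi]
  have hvol : ∀ (q : ℕ) (p : Fin n → ℤ), volume (T q p) = ENNReal.ofReal (δ^n) * volume A := by
    intro q p
    simp only [hTdef]
    rw [measure_vadd, Measure.addHaar_smul]
    congr 1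
    rw [abs_pow, abs_neg, abs_of_pos hδ0]
    congr 1
    simp
  have hcardP : ∀ q : ℕ, (P q).card = (2*q*M+1)^n := by
    intro q
    simp only [hPdef]
    rw [Fintype.card_piFinset]
    simp only [Int.card_Icc]
    rw [Finset.prod_const, Finset.card_univ, Fintype.card_fin]
    congr 1
    have h : ((q:ℤ)*(M:ℤ) + 1 - -((q:ℤ)*(M:ℤ))) = ((2*q*M+1 : ℕ) : ℤ) := by push_cast; ring
    rw [h, Int.toNat_natCast]
  have hcard : ∀ q ∈ Finset.Icc 1 Q, (P q).card ≤ (2*M+1)^n * Q^n := by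
    intro q hq
    obtain ⟨h1q, hqQ⟩ := Finset.mem_Icc.1 hq
    have hQ1 : 1 ≤ Q := h1q.trans hqQ
    calc (P q).card = (2*q*M+1)^n := hcardP q
      _ ≤ ((2*M+1)*Q)^n := by
          refine Nat.pow_le_pow_left ?_ n
          nlinarith
      _ = (2*M+1)^n * Q^n := mul_pow _ _ _
  set D : ℝ≥0∞ := ENNReal.ofReal (δ^n) * volume A with hDdef
  have hmeas : volume S ≤ (((2*M+1)^n * Q^(n+1) : ℕ) : ℝ≥0∞) * D := by
    calc volume S ≤ volume (⋃ q ∈ Finset.Icc 1 Q, ⋃ p ∈ P q, T q p) := measure_mono hsub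
      _ ≤ ∑ q ∈ Finset.Icc 1 Q, volume (⋃ p ∈ P q, T q p) := measure_biUnion_finset_le _ _
      _ ≤ ∑ q ∈ Finset.Icc 1 Q, ∑ p ∈ P q, volume (T q p) :=
          Finset.sum_le_sum (fun q _ => measure_biUnion_finset_le _ _)
      _ = ∑ q ∈ Finset.Icc 1 Q, ((P q).card : ℝ≥0∞) * D := by
          refine Finset.sum_congr rfl fun q _ => ?_
          rw [Finset.sum_congr rfl fun p _ => hvol q p, Finset.sum_const, nsmul_eq_mul]
      _ ≤ ∑ q ∈ Finset.Icc 1 Q, (((2*M+1)^n * Q^n : ℕ) : ℝ≥0∞) * D := by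
          refine Finset.sum_le_sum fun q hq => ?_
          gcongr
          exact_mod_cast hcard q hq
      _ = ((Finset.Icc 1 Q).card : ℝ≥0∞) * ((((2*M+1)^n * Q^n : ℕ) : ℝ≥0∞) * D) := by
          rw [Finset.sum_const, nsmul_eq_mul]
      _ = (((2*M+1)^n * Q^(n+1) : ℕ) : ℝ≥0∞) * D := by
          rw [Nat.card_Icc]
          push_cast
          ring
  have hDfin : D ≠ ⊤ := ENNReal.mul_ne_top ENNReal.ofReal_ne_top hvA.ne
  have hfin : (((2*M+1)^n * Q^(n+1) : ℕ) : ℝ≥0∞) * D ≠ ⊤ :=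
    ENNReal.mul_ne_top (ENNReal.natCast_ne_top _) hDfin
  have h1 := ENNReal.toReal_mono hfin hmeas
  rw [ENNReal.toReal_mul, hDdef, ENNReal.toReal_mul, ENNReal.toReal_natCast,
    ENNReal.toReal_ofReal (by positivity)] at h1
  -- now pure real estimates
  have hQle : (Q:ℝ) ≤ L / δ^e := Nat.floor_le (by positivity)
  have hpow : ((δ:ℝ)^e)^(n+1) = δ^n := by
    rw [← Real.rpow_natCast (δ^e) (n+1), ← Real.rpow_mul hδ0.le, ← Real.rpow_natCast δ n]
    congr 1
    rw [hedef]
    have hne : (n:ℝ) + 1 ≠ 0 := by positivity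
    push_cast
    field_simp
  have hkey : (Q:ℝ)^(n+1) * δ^n ≤ L^(n+1) := by
    have h2 : (Q:ℝ)^(n+1) ≤ (L/δ^e)^(n+1) := pow_le_pow_left₀ (Nat.cast_nonneg _) hQle _
    have h3 : (L/δ^e)^(n+1) * δ^n = L^(n+1) := by
      rw [div_pow, hpow]
      field_simp
    nlinarith [pow_nonneg hδ0.le n]
  calc (volume S).toReal ≤ (((2*M+1)^n * Q^(n+1) : ℕ) : ℝ) * (δ^n * vA) := h1
    _ = ((2*M+1:ℝ))^n * ((Q:ℝ)^(n+1) * δ^n) * vA := by push_cast; ring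
    _ ≤ ((2*M+1:ℝ))^n * L^(n+1) * vA := by gcongr
    _ ≤ (2*M+1)^n * (vA + 1) * L^(n+1) := by
        nlinarith [pow_nonneg hL0.le (n+1), pow_nonneg (show (0:ℝ) ≤ 2*(M:ℝ)+1 by positivity) n]
end

section
/- Let n ≥ 1. There exists a constant C > 0 such that for all R ∈ (0,1] and all y ≥ 1, ∫_{[0,1]ⁿ} #{ (p,q) ∈ ℤⁿ⁺¹ : (p,q) primitive, q ≥ 1, y^{2/n}·‖p − q·x‖₂² + y^{−2}·q² ≤ R² } dx ≤ C·R^{n+1}, where ‖·‖₂ is the Euclidean norm on ℝⁿ and the integral is with respect to Lebesgue measure. -/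
open MeasureTheory Set
open scoped ENNReal

/-- `(p, q) ∈ ℤⁿ⁺¹` is primitive if the gcd of all its coordinates is `1`. -/
def IsPrimitivePair {n : ℕ} (p : Fin n → ℤ) (q : ℤ) : Prop :=
  Finset.univ.gcd (Fin.snoc p q : Fin (n+1) → ℤ) = 1

theorem stmt10 (n : ℕ) (hn : 1 ≤ n) :
    ∃ C > 0, ∀ R : ℝ, R ∈ Ioc (0:ℝ) 1 → ∀ y : ℝ, 1 ≤ y →
      ∫⁻ x in Icc (0 : Fin n → ℝ) 1,
        ((Set.encard {pq : (Fin n → ℤ) × ℤ | IsPrimitivePair pq.1 pq.2 ∧ 1 ≤ pq.2 ∧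
            y ^ ((2:ℝ)/n) * (∑ i, ((pq.1 i : ℝ) - (pq.2 : ℝ) * x i) ^ 2)
              + (pq.2 : ℝ) ^ 2 / y ^ 2 ≤ R ^ 2} : ℝ≥0∞))
        ≤ ENNReal.ofReal (C * R ^ (n + 1)) := by
  refine ⟨8 ^ n, by positivity, ?_⟩
  rintro R ⟨hR0, hR1⟩ y hy
  have hn0 : (0:ℝ) < n := by exact_mod_cast hn
  have hy0 : (0:ℝ) < y := lt_of_lt_of_le one_pos hy
  set s : ℝ := y ^ (-(1:ℝ)/n) with hs_def
  have hs0 : 0 < s := Real.rpow_pos_of_pos hy0 _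
  have hs1 : s ≤ 1 := Real.rpow_le_one_of_one_le_of_nonpos hy
    (by rw [div_nonpos_iff]; right; constructor <;> [norm_num; exact hn0.le])
  have hsn : s ^ n * y = 1 := by
    rw [hs_def, ← Real.rpow_natCast (y ^ (-(1:ℝ)/n)) n, ← Real.rpow_mul hy0.le]
    rw [div_mul_cancel₀ _ hn0.ne', Real.rpow_neg_one]
    field_simp
  have hys : y ^ ((2:ℝ)/n) * s ^ 2 = 1 := by
    rw [hs_def, ← Real.rpow_natCast (y ^ (-(1:ℝ)/n)) 2, ← Real.rpow_mul hy0.le,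
      ← Real.rpow_add hy0]
    push_cast
    rw [show (2:ℝ)/n + -1/n * 2 = 0 by ring, Real.rpow_zero]
  -- the superset sets without primitivity
  set A : (Fin n → ℤ) × ℤ → Set (Fin n → ℝ) := fun pq =>
    {x | 1 ≤ pq.2 ∧ y ^ ((2:ℝ)/n) * (∑ i, ((pq.1 i : ℝ) - (pq.2 : ℝ) * x i) ^ 2)
      + (pq.2 : ℝ) ^ 2 / y ^ 2 ≤ R ^ 2} with hA_def
  have hAmeas : ∀ pq, MeasurableSet (A pq) := by
    intro pq
    rw [hA_def]
    simp only [Set.setOf_and]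
    refine (MeasurableSet.const _).inter (measurableSet_le ?_ measurable_const)
    refine Measurable.add (Measurable.const_mul ?_ _) measurable_const
    exact Finset.measurable_sum _ fun i _ => by fun_prop
  -- basic consequences of membership in `A pq`
  have key : ∀ p q (x : Fin n → ℝ), x ∈ Icc (0 : Fin n → ℝ) 1 → x ∈ A (p, q) →
      1 ≤ q ∧ (q:ℝ) ≤ R * y ∧ ∀ i, |(p i : ℝ) - (q:ℝ) * x i| ≤ R * s := by
    rintro p q x hx ⟨hq1, hineq⟩
    have hx' : ∀ i, 0 ≤ x i ∧ x i ≤ 1 := fun i => ⟨hx.1 i, hx.2 i⟩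
    have hq0 : (0:ℝ) < q := by exact_mod_cast hq1
    have hsum : 0 ≤ ∑ i, ((p i : ℝ) - (q:ℝ) * x i) ^ 2 :=
      Finset.sum_nonneg fun i _ => sq_nonneg _
    have hypow : 0 < y ^ ((2:ℝ)/n) := Real.rpow_pos_of_pos hy0 _
    have hqRy : (q:ℝ) ≤ R * y := by
      have h1 : (q:ℝ)^2 / y^2 ≤ R^2 := by nlinarith [mul_nonneg hypow.le hsum]
      have h2 : (q:ℝ)^2 ≤ (R*y)^2 := by
        rw [div_le_iff₀ (by positivity)] at h1; nlinarith
      exact (abs_le_of_sq_le_sq' h2 (by positivity)).2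
    refine ⟨hq1, hqRy, fun i => ?_⟩
    have hterm : ((p i : ℝ) - (q:ℝ) * x i) ^ 2 ≤ ∑ j, ((p j : ℝ) - (q:ℝ) * x j) ^ 2 :=
      Finset.single_le_sum (f := fun j => ((p j : ℝ) - (q:ℝ) * x j) ^ 2)
        (fun j _ => sq_nonneg _) (Finset.mem_univ i)
    have h3 : y ^ ((2:ℝ)/n) * ((p i : ℝ) - (q:ℝ) * x i) ^ 2 ≤ R ^ 2 := by
      nlinarith [sq_nonneg ((q:ℝ)/y), div_nonneg (sq_nonneg (q:ℝ)) (sq_nonneg y),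
        mul_le_mul_of_nonneg_left hterm hypow.le]
    have h4 : ((p i : ℝ) - (q:ℝ) * x i) ^ 2 ≤ (R * s) ^ 2 := by
      have := mul_le_mul_of_nonneg_right h3 (sq_nonneg s)
      calc ((p i : ℝ) - (q:ℝ) * x i) ^ 2
          = y ^ ((2:ℝ)/n) * ((p i : ℝ) - (q:ℝ) * x i) ^ 2 * s ^ 2 := by
            rw [mul_comm (y ^ ((2:ℝ)/n)) _, mul_assoc, hys, mul_one]
        _ ≤ R ^ 2 * s ^ 2 := this
        _ = (R * s) ^ 2 := by ring
    exact abs_le.mpr (abs_le_of_sq_le_sq' h4 (by positivity))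
  set Q : ℤ := ⌊R * y⌋ with hQ_def
  -- pointwise bound of the cardinality by a sum of indicators
  have hpt : ∀ x : Fin n → ℝ,
      ((Set.encard {pq : (Fin n → ℤ) × ℤ | IsPrimitivePair pq.1 pq.2 ∧ 1 ≤ pq.2 ∧
          y ^ ((2:ℝ)/n) * (∑ i, ((pq.1 i : ℝ) - (pq.2 : ℝ) * x i) ^ 2)
            + (pq.2 : ℝ) ^ 2 / y ^ 2 ≤ R ^ 2}) : ℝ≥0∞)
        ≤ ∑' pq : (Fin n → ℤ) × ℤ, (A pq).indicator 1 x := by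
    intro x
    have hsub : {pq : (Fin n → ℤ) × ℤ | IsPrimitivePair pq.1 pq.2 ∧ 1 ≤ pq.2 ∧
        y ^ ((2:ℝ)/n) * (∑ i, ((pq.1 i : ℝ) - (pq.2 : ℝ) * x i) ^ 2)
          + (pq.2 : ℝ) ^ 2 / y ^ 2 ≤ R ^ 2} ⊆ {pq | x ∈ A pq} := by
      rintro pq ⟨-, h1, h2⟩; exact ⟨h1, h2⟩
    calc ((Set.encard _ : ℕ∞) : ℝ≥0∞)
        ≤ ((Set.encard {pq : (Fin n → ℤ) × ℤ | x ∈ A pq} : ℕ∞) : ℝ≥0∞) := by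
          exact_mod_cast ENat.toENNReal_le.mpr (Set.encard_le_encard hsub)
      _ = ∑' pq : {pq : (Fin n → ℤ) × ℤ | x ∈ A pq}, (1:ℝ≥0∞) :=
          (ENNReal.tsum_set_one _).symm
      _ = ∑' pq : (Fin n → ℤ) × ℤ,
            Set.indicator {pq : (Fin n → ℤ) × ℤ | x ∈ A pq} 1 pq := by
          rw [← tsum_subtype]
          rfl
      _ ≤ ∑' pq : (Fin n → ℤ) × ℤ, (A pq).indicator 1 x := by
          refine ENNReal.tsum_le_tsum fun pq => ?_
          by_cases h : x ∈ A pq <;> simp [Set.indicator_apply, h]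
  have hRs : 0 ≤ R * s := by positivity
  -- the per-(p,q) volume bound and support restrictions
  calc ∫⁻ x in Icc (0 : Fin n → ℝ) 1,
        ((Set.encard {pq : (Fin n → ℤ) × ℤ | IsPrimitivePair pq.1 pq.2 ∧ 1 ≤ pq.2 ∧
            y ^ ((2:ℝ)/n) * (∑ i, ((pq.1 i : ℝ) - (pq.2 : ℝ) * x i) ^ 2)
              + (pq.2 : ℝ) ^ 2 / y ^ 2 ≤ R ^ 2}) : ℝ≥0∞)
      ≤ ∫⁻ x in Icc (0 : Fin n → ℝ) 1,
          ∑' pq : (Fin n → ℤ) × ℤ, (A pq).indicator 1 x := lintegral_mono hpt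
    _ = ∑' pq : (Fin n → ℤ) × ℤ,
          ∫⁻ x in Icc (0 : Fin n → ℝ) 1, (A pq).indicator 1 x :=
        lintegral_tsum fun pq => (measurable_one.indicator (hAmeas pq)).aemeasurable
    _ = ∑' pq : (Fin n → ℤ) × ℤ, volume (A pq ∩ Icc (0 : Fin n → ℝ) 1) := by
        refine tsum_congr fun pq => ?_
        rw [lintegral_indicator_one (hAmeas pq), Measure.restrict_apply (hAmeas pq)]
    _ = ∑' q : ℤ, ∑' p : Fin n → ℤ, volume (A (p, q) ∩ Icc (0 : Fin n → ℝ) 1) := by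
        rw [ENNReal.tsum_prod']; exact ENNReal.tsum_comm
    _ = ∑ q ∈ Finset.Icc (1:ℤ) Q,
          ∑' p : Fin n → ℤ, volume (A (p, q) ∩ Icc (0 : Fin n → ℝ) 1) := by
        refine tsum_eq_sum fun q hq => ?_
        rw [ENNReal.tsum_eq_zero]
        intro p
        rw [show A (p, q) ∩ Icc (0 : Fin n → ℝ) 1 = ∅ from ?_, measure_empty]
        rw [Set.eq_empty_iff_forall_notMem]
        rintro x ⟨hxA, hxc⟩
        obtain ⟨h1, h2, -⟩ := key p q x hxc hxA
        exact hq (Finset.mem_Icc.mpr ⟨h1, Int.le_floor.mpr h2⟩)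
    _ ≤ ∑ q ∈ Finset.Icc (1:ℤ) Q, ENNReal.ofReal ((8 * (R * s)) ^ n) := by
        refine Finset.sum_le_sum fun q hq => ?_
        obtain ⟨hq1, -⟩ := Finset.mem_Icc.mp hq
        have hq0 : (0:ℝ) < (q:ℝ) := by exact_mod_cast hq1
        -- p must lie in a finite box
        have hvanish : ∀ p ∉ Finset.Icc (fun _ : Fin n => (-1:ℤ)) (fun _ => q + 1),
            volume (A (p, q) ∩ Icc (0 : Fin n → ℝ) 1) = 0 := by
          intro p hp
          rw [show A (p, q) ∩ Icc (0 : Fin n → ℝ) 1 = ∅ from ?_, measure_empty]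
          rw [Set.eq_empty_iff_forall_notMem]
          rintro x ⟨hxA, hxc⟩
          obtain ⟨-, -, h3⟩ := key p q x hxc hxA
          refine hp (Finset.mem_Icc.mpr ⟨fun i => ?_, fun i => ?_⟩)
          · have h4 := (abs_le.mp (h3 i)).1
            have hx0 : (0:ℝ) ≤ x i := by simpa using hxc.1 i
            have h5 : 0 ≤ (q:ℝ) * x i := mul_nonneg hq0.le hx0
            have h6 : R * s ≤ 1 := mul_le_one₀ hR1 hs0.le hs1
            have : (-1:ℝ) ≤ (p i : ℝ) := by nlinarith
            exact_mod_cast this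
          · have h4 := (abs_le.mp (h3 i)).2
            have hx1 : x i ≤ 1 := by simpa using hxc.2 i
            have h5 : (q:ℝ) * x i ≤ q := by
              have := mul_le_mul_of_nonneg_left hx1 hq0.le
              linarith
            have h6 : R * s ≤ 1 := mul_le_one₀ hR1 hs0.le hs1
            have : (p i : ℝ) ≤ (q:ℝ) + 1 := by nlinarith
            exact_mod_cast this
        -- volume of each translated box
        have hvol : ∀ p : Fin n → ℤ, volume (A (p, q) ∩ Icc (0 : Fin n → ℝ) 1)
            ≤ ENNReal.ofReal ((2 * (R * s) / q) ^ n) := by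
          intro p
          have hsub : A (p, q) ∩ Icc (0 : Fin n → ℝ) 1 ⊆
              Icc (fun i => ((p i : ℝ) - R * s) / q) (fun i => ((p i : ℝ) + R * s) / q) := by
            rintro x ⟨hxA, hxc⟩
            obtain ⟨-, -, h3⟩ := key p q x hxc hxA
            constructor <;> intro i
            · have h4 := (abs_le.mp (h3 i)).2
              rw [div_le_iff₀ hq0]; nlinarith
            · have h4 := (abs_le.mp (h3 i)).1
              rw [le_div_iff₀ hq0]; nlinarith
          calc volume (A (p, q) ∩ Icc (0 : Fin n → ℝ) 1)
              ≤ volume (Icc (fun i => ((p i : ℝ) - R * s) / q)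
                  (fun i => ((p i : ℝ) + R * s) / q)) := measure_mono hsub
            _ = ∏ _i : Fin n, ENNReal.ofReal (2 * (R * s) / q) := by
                rw [Real.volume_Icc_pi]
                refine Finset.prod_congr rfl fun i _ => ?_
                rw [show ((p i : ℝ) + R * s) / q - ((p i : ℝ) - R * s) / q
                  = 2 * (R * s) / q from by rw [div_sub_div_same]; ring_nf]
            _ = ENNReal.ofReal ((2 * (R * s) / q) ^ n) := by
                rw [Finset.prod_const, Finset.card_univ, Fintype.card_fin,
                  ← ENNReal.ofReal_pow (by positivity)]
        calc ∑' p : Fin n → ℤ, volume (A (p, q) ∩ Icc (0 : Fin n → ℝ) 1)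
            = ∑ p ∈ Finset.Icc (fun _ : Fin n => (-1:ℤ)) (fun _ => q + 1),
                volume (A (p, q) ∩ Icc (0 : Fin n → ℝ) 1) := tsum_eq_sum hvanish
          _ ≤ ∑ p ∈ Finset.Icc (fun _ : Fin n => (-1:ℤ)) (fun _ => q + 1),
                ENNReal.ofReal ((2 * (R * s) / q) ^ n) :=
              Finset.sum_le_sum fun p _ => hvol p
          _ = ((q + 3).toNat ^ n : ℕ) * ENNReal.ofReal ((2 * (R * s) / q) ^ n) := by
              rw [Finset.sum_const, nsmul_eq_mul]
              congr 2
              rw [Pi.card_Icc, Finset.prod_const, Finset.card_univ, Fintype.card_fin,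
                Int.card_Icc]
              congr 1
              omega
          _ ≤ ENNReal.ofReal ((8 * (R * s)) ^ n) := by
              rw [← ENNReal.ofReal_natCast, ← ENNReal.ofReal_mul (by positivity)]
              refine ENNReal.ofReal_le_ofReal ?_
              have hc : (((q + 3).toNat ^ n : ℕ) : ℝ) = ((q:ℝ) + 3) ^ n := by
                have h9 : (((q + 3).toNat : ℕ) : ℝ) = (q:ℝ) + 3 := by
                  exact_mod_cast congrArg (Int.cast : ℤ → ℝ)
                    (Int.toNat_of_nonneg (by omega : (0:ℤ) ≤ q + 3))
                rw [Nat.cast_pow, h9]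
              rw [hc, ← mul_pow]
              refine pow_le_pow_left₀ (by positivity) ?_ n
              have h48 : ((q:ℝ) + 3) ≤ 4 * q := by
                have : (1:ℝ) ≤ (q:ℝ) := by exact_mod_cast hq1
                linarith
              calc ((q:ℝ) + 3) * (2 * (R * s) / q) ≤ 4 * q * (2 * (R * s) / q) :=
                    mul_le_mul_of_nonneg_right h48 (by positivity)
                _ = 8 * (R * s) := by field_simp; ring
    _ = (Finset.Icc (1:ℤ) Q).card * ENNReal.ofReal ((8 * (R * s)) ^ n) := by
        rw [Finset.sum_const, nsmul_eq_mul]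
    _ ≤ ENNReal.ofReal (8 ^ n * R ^ (n + 1)) := by
        rw [Int.card_Icc, ← ENNReal.ofReal_natCast, ← ENNReal.ofReal_mul (by positivity)]
        refine ENNReal.ofReal_le_ofReal ?_
        have hcard : (((Q + 1 - 1).toNat : ℕ) : ℝ) ≤ R * y := by
          rcases le_or_gt 0 Q with h | h
          · rw [show Q + 1 - 1 = Q by ring]
            have h2 : ((Q.toNat : ℕ) : ℝ) = (Q : ℝ) := by
              exact_mod_cast congrArg (Int.cast : ℤ → ℝ) (Int.toNat_of_nonneg h)
            rw [h2, hQ_def]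
            exact Int.floor_le (R * y)
          · rw [show Q + 1 - 1 = Q by ring, Int.toNat_of_nonpos h.le]
            norm_num
            positivity
        calc (((Q + 1 - 1).toNat : ℕ) : ℝ) * (8 * (R * s)) ^ n
            ≤ (R * y) * (8 * (R * s)) ^ n := by
              exact mul_le_mul_of_nonneg_right hcard (by positivity)
          _ = 8 ^ n * R ^ (n + 1) * (s ^ n * y) := by ring
          _ = 8 ^ n * R ^ (n + 1) := by rw [hsn, mul_one]
end

section
/- Let n ≥ 1, x₀ ∈ ℝⁿ and c > 0. There exists a constant C > 0 such that for every integer N ≥ 1, every y with 1 ≤ y ≤ c^{−n/(n+1)}·N^{n/(n+1)}, and every R ∈ (0,1], one has N^{−n} · Σ_{j ∈ ℤⁿ ∩ [0,N]ⁿ} #{ (p,q) ∈ ℤⁿ⁺¹ : (p,q) primitive, q ≥ 1, y^{2/n}·‖p − q·(x₀ + N^{−1}j)‖₂² + y^{−2}·q² ≤ R² } ≤ C·R^{n+1}, where ‖·‖₂ is the Euclidean norm on ℝⁿ. -/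
open MeasureTheory Set
open scoped ENNReal

lemma aux_toNat_le (z : ℤ) (x : ℝ) (h : (z:ℝ) ≤ x) (hx : 0 ≤ x) : ((z.toNat : ℝ)) ≤ x := by
  rcases le_or_gt z 0 with h0 | h0
  · rw [Int.toNat_of_nonpos h0]; simpa using hx
  · rw [show ((z.toNat : ℝ)) = ((z.toNat : ℤ) : ℝ) by push_cast; ring,
      Int.toNat_of_nonneg h0.le]; exact h

lemma aux_card_Icc_le (a b : ℤ) (lo hi : ℝ) (ha : lo ≤ (a:ℝ)) (hb : (b:ℝ) ≤ hi)
    (h : 0 ≤ hi - lo + 1) : ((Finset.Icc a b).card : ℝ) ≤ hi - lo + 1 := by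
  rw [Int.card_Icc]
  apply aux_toNat_le _ _ _ h
  push_cast
  linarith

lemma aux_coord (N : ℕ) (hN : 1 ≤ N) (q : ℤ) (hq : 1 ≤ q) (b r : ℝ) (hr : 0 ≤ r) :
    (∑ t ∈ Finset.Icc (0:ℤ) (N:ℤ),
        ((Finset.Icc ⌈b + (q:ℝ)*(t:ℝ)/(N:ℝ) - r⌉ ⌊b + (q:ℝ)*(t:ℝ)/(N:ℝ) + r⌋).card : ℝ))
      ≤ ((q:ℝ) + 2*r + 1) * (2*r*(N:ℝ)/(q:ℝ) + 1) := by
  have hq0 : (0:ℝ) < (q:ℝ) := by exact_mod_cast hq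
  have hN0 : (0:ℝ) < (N:ℝ) := by exact_mod_cast hN
  set F : ℤ → Finset ℤ := fun t => Finset.Icc ⌈b + (q:ℝ)*(t:ℝ)/(N:ℝ) - r⌉ ⌊b + (q:ℝ)*(t:ℝ)/(N:ℝ) + r⌋ with hF
  set U : Finset (ℤ × ℤ) := (Finset.Icc (0:ℤ) (N:ℤ)).biUnion (fun t => {t} ×ˢ F t) with hU
  have hcard : (U.card : ℝ) = ∑ t ∈ Finset.Icc (0:ℤ) (N:ℤ), ((F t).card : ℝ) := by
    rw [hU, Finset.card_biUnion]
    · push_cast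
      refine Finset.sum_congr rfl fun t _ => ?_
      rw [Finset.card_product, Finset.card_singleton, one_mul]
    · intro x _ y _ hxy
      simp only [Finset.disjoint_left, Finset.mem_product, Finset.mem_singleton]
      rintro ⟨a, m⟩ ⟨rfl, -⟩ ⟨rfl, -⟩
      exact hxy rfl
  rw [← hcard]
  set M : Finset ℤ := Finset.Icc ⌈b - r⌉ ⌊b + (q:ℝ) + r⌋ with hM
  set V : Finset (ℤ × ℤ) := M.biUnion
      (fun m => (Finset.Icc ⌈((N:ℝ)*((m:ℝ) - b - r))/(q:ℝ)⌉ ⌊((N:ℝ)*((m:ℝ) - b + r))/(q:ℝ)⌋) ×ˢ {m}) with hV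
  have hUV : U ⊆ V := by
    intro x hx
    rw [hU, Finset.mem_biUnion] at hx
    obtain ⟨t, htI, hxt⟩ := hx
    rw [Finset.mem_product, Finset.mem_singleton] at hxt
    obtain ⟨hx1, hx2⟩ := hxt
    simp only [hF, Finset.mem_Icc] at hx2
    rw [Finset.mem_Icc] at htI
    obtain ⟨ht0, htN⟩ := htI
    have h1 : b + (q:ℝ)*(t:ℝ)/(N:ℝ) - r ≤ (x.2:ℝ) := Int.ceil_le.mp hx2.1
    have h2 : (x.2:ℝ) ≤ b + (q:ℝ)*(t:ℝ)/(N:ℝ) + r := Int.le_floor.mp hx2.2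
    have ht0' : (0:ℝ) ≤ (t:ℝ) := by exact_mod_cast ht0
    have htN' : (t:ℝ) ≤ (N:ℝ) := by exact_mod_cast htN
    have hu0 : (0:ℝ) ≤ (q:ℝ)*(t:ℝ)/(N:ℝ) := by positivity
    have huq : (q:ℝ)*(t:ℝ)/(N:ℝ) ≤ (q:ℝ) := by
      rw [div_le_iff₀ hN0]; nlinarith
    have hNu : (N:ℝ) * ((q:ℝ)*(t:ℝ)/(N:ℝ)) = (q:ℝ)*(t:ℝ) := by
      field_simp
    rw [hV, Finset.mem_biUnion]
    refine ⟨x.2, ?_, ?_⟩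
    · rw [hM, Finset.mem_Icc]
      exact ⟨Int.ceil_le.mpr (by linarith), Int.le_floor.mpr (by linarith)⟩
    · rw [Finset.mem_product, Finset.mem_singleton]
      rw [hx1]
      refine ⟨Finset.mem_Icc.mpr ⟨Int.ceil_le.mpr ?_, Int.le_floor.mpr ?_⟩, rfl⟩
      · rw [div_le_iff₀ hq0]
        have := mul_le_mul_of_nonneg_left (by linarith : (x.2:ℝ) - b - r ≤ (q:ℝ)*(t:ℝ)/(N:ℝ)) hN0.le
        nlinarith
      · rw [le_div_iff₀ hq0]
        have := mul_le_mul_of_nonneg_left (by linarith : (q:ℝ)*(t:ℝ)/(N:ℝ) ≤ (x.2:ℝ) - b + r) hN0.le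
        nlinarith
  have hd : ∀ m : ℤ, (N:ℝ)*((m:ℝ) - b + r)/(q:ℝ) - (N:ℝ)*((m:ℝ) - b - r)/(q:ℝ) = 2*r*(N:ℝ)/(q:ℝ) := by
    intro m; field_simp; ring
  calc (U.card : ℝ) ≤ (V.card : ℝ) := by exact_mod_cast Finset.card_le_card hUV
    _ ≤ ∑ m ∈ M, (((Finset.Icc ⌈((N:ℝ)*((m:ℝ) - b - r))/(q:ℝ)⌉ ⌊((N:ℝ)*((m:ℝ) - b + r))/(q:ℝ)⌋) ×ˢ ({m} : Finset ℤ)).card : ℝ) := by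
        rw [hV]; exact_mod_cast Finset.card_biUnion_le
    _ ≤ ∑ m ∈ M, (2*r*(N:ℝ)/(q:ℝ) + 1) := by
        refine Finset.sum_le_sum fun m _ => ?_
        rw [Finset.card_product, Finset.card_singleton, mul_one]
        have h0 : (0:ℝ) ≤ 2*r*(N:ℝ)/(q:ℝ) + 1 := by positivity
        have := aux_card_Icc_le ⌈((N:ℝ)*((m:ℝ) - b - r))/(q:ℝ)⌉ ⌊((N:ℝ)*((m:ℝ) - b + r))/(q:ℝ)⌋
          (((N:ℝ)*((m:ℝ) - b - r))/(q:ℝ)) (((N:ℝ)*((m:ℝ) - b + r))/(q:ℝ))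
          (Int.le_ceil _) (Int.floor_le _) (by rw [hd m]; exact h0)
        rw [hd m] at this
        exact this
    _ ≤ ((q:ℝ) + 2*r + 1) * (2*r*(N:ℝ)/(q:ℝ) + 1) := by
        rw [Finset.sum_const, nsmul_eq_mul]
        have h1 := aux_card_Icc_le ⌈b - r⌉ ⌊b + (q:ℝ) + r⌋ (b - r) (b + (q:ℝ) + r)
          (Int.le_ceil _) (Int.floor_le _) (by linarith)
        have h2 : (0:ℝ) ≤ 2*r*(N:ℝ)/(q:ℝ) + 1 := by positivity
        rw [hM]
        nlinarith

lemma aux_add_pow_le (n : ℕ) (a b : ℝ) (ha : 0 ≤ a) (hb : 0 ≤ b) :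
    (a + b)^n ≤ 2^n * (a^n + b^n) := by
  have h1 : a + b ≤ 2 * max a b := by
    rcases le_total a b with h | h
    · rw [max_eq_right h]; linarith
    · rw [max_eq_left h]; linarith
  have h2 : (a+b)^n ≤ (2 * max a b)^n :=
    pow_le_pow_left₀ (by positivity) h1 n
  refine h2.trans ?_
  rw [mul_pow]
  have h3 : (max a b)^n ≤ a^n + b^n := by
    rcases le_total a b with h | h
    · rw [max_eq_right h]; nlinarith [pow_nonneg ha n]
    · rw [max_eq_left h]; nlinarith [pow_nonneg hb n]
  have : (0:ℝ) ≤ 2^n := by positivity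
  nlinarith

set_option maxHeartbeats 1000000 in
theorem stmt11 (n : ℕ) (hn : 1 ≤ n) (x₀ : Fin n → ℝ) (c : ℝ) (hc : 0 < c) :
    ∃ C > 0, ∀ N : ℕ, 1 ≤ N → ∀ y : ℝ,
      1 ≤ y → y ≤ c ^ (-(n:ℝ)/(n+1)) * (N : ℝ) ^ ((n:ℝ)/(n+1)) →
      ∀ R : ℝ, R ∈ Ioc (0:ℝ) 1 →
      ((N : ℝ≥0∞) ^ n)⁻¹ *
        ∑ j ∈ Finset.Icc (0 : Fin n → ℤ) (fun _ => (N : ℤ)),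
          ((Set.encard {pq : (Fin n → ℤ) × ℤ | IsPrimitivePair pq.1 pq.2 ∧ 1 ≤ pq.2 ∧
              y ^ ((2:ℝ)/n) *
                (∑ i, ((pq.1 i : ℝ) - (pq.2 : ℝ) * (x₀ i + (N:ℝ)⁻¹ * (j i : ℝ))) ^ 2)
                + (pq.2 : ℝ) ^ 2 / y ^ 2 ≤ R ^ 2} : ℝ≥0∞))
        ≤ ENNReal.ofReal (C * R ^ (n + 1)) := by
  refine ⟨16^n * (1 + (c^n)⁻¹), by positivity, ?_⟩
  intro N hN y hy1 hy2 R hR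
  obtain ⟨hR0, hR1⟩ := hR
  have hn0 : (0:ℝ) < (n:ℝ) := by exact_mod_cast hn
  have hy0 : (0:ℝ) < y := lt_of_lt_of_le one_pos hy1
  have hN0 : (0:ℝ) < (N:ℝ) := by exact_mod_cast hN
  set r : ℝ := R / y ^ ((1:ℝ)/(n:ℝ)) with hrdef
  have hyp1 : (1:ℝ) ≤ y ^ ((1:ℝ)/(n:ℝ)) := Real.one_le_rpow hy1 (by positivity)
  have hr0 : 0 < r := div_pos hR0 (lt_of_lt_of_le one_pos hyp1)
  have hrR : r ≤ R := div_le_self hR0.le hyp1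
  have hr1 : r ≤ 1 := hrR.trans hR1
  -- r² y^{2/n} = R²
  have hpow2 : (y ^ ((1:ℝ)/(n:ℝ)))^(2:ℕ) = y ^ ((2:ℝ)/(n:ℝ)) := by
    rw [← Real.rpow_natCast (y ^ ((1:ℝ)/(n:ℝ))) 2, ← Real.rpow_mul hy0.le]
    congr 1
    push_cast
    ring
  have hr2 : r^2 * y ^ ((2:ℝ)/(n:ℝ)) = R^2 := by
    rw [hrdef, div_pow, ← hpow2, div_mul_cancel₀]
    positivity
  -- rⁿ y = Rⁿ
  have hpown : (y ^ ((1:ℝ)/(n:ℝ)))^(n:ℕ) = y := by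
    rw [← Real.rpow_natCast (y ^ ((1:ℝ)/(n:ℝ))) n, ← Real.rpow_mul hy0.le,
      one_div_mul_cancel hn0.ne', Real.rpow_one]
  have hrn : r^n * y = R^n := by
    rw [hrdef, div_pow, hpown, div_mul_cancel₀]
    exact hy0.ne'
  -- y^{n+1} ≤ (cⁿ)⁻¹ Nⁿ
  have hyn1 : y^(n+1) ≤ (c^n)⁻¹ * (N:ℝ)^n := by
    have h1 : y^(n+1) ≤ (c ^ (-(n:ℝ)/((n:ℝ)+1)) * (N : ℝ) ^ ((n:ℝ)/((n:ℝ)+1)))^(n+1) :=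
      pow_le_pow_left₀ hy0.le hy2 (n+1)
    refine h1.trans_eq ?_
    rw [mul_pow, ← Real.rpow_natCast (c ^ (-(n:ℝ)/((n:ℝ)+1))) (n+1),
      ← Real.rpow_natCast ((N:ℝ) ^ ((n:ℝ)/((n:ℝ)+1))) (n+1),
      ← Real.rpow_mul hc.le, ← Real.rpow_mul hN0.le]
    have hne : ((n:ℝ)+1) ≠ 0 := by positivity
    have e1 : -(n:ℝ)/((n:ℝ)+1) * ((n+1 : ℕ):ℝ) = -(n:ℝ) := by
      push_cast; field_simp
    have e2 : (n:ℝ)/((n:ℝ)+1) * ((n+1 : ℕ):ℝ) = (n:ℝ) := by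
      push_cast; field_simp
    rw [e1, e2, Real.rpow_neg hc.le, Real.rpow_natCast, Real.rpow_natCast]
  set Q : ℤ := ⌊y * R⌋ with hQdef
  have hQle : (Q:ℝ) ≤ y*R := Int.floor_le _
  -- the covering finsets
  set P : ℤ → (Fin n → ℤ) → Finset (Fin n → ℤ) := fun q j => Fintype.piFinset fun i =>
    Finset.Icc ⌈(q:ℝ)*(x₀ i) + (q:ℝ)*((j i):ℝ)/(N:ℝ) - r⌉ ⌊(q:ℝ)*(x₀ i) + (q:ℝ)*((j i):ℝ)/(N:ℝ) + r⌋
    with hPdef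
  set G : (Fin n → ℤ) → Finset ((Fin n → ℤ) × ℤ) := fun j =>
    (Finset.Icc 1 Q).biUnion fun q => (P q j) ×ˢ {q} with hGdef
  -- step 1 : inclusion
  have hsub : ∀ j : Fin n → ℤ, {pq : (Fin n → ℤ) × ℤ | IsPrimitivePair pq.1 pq.2 ∧ 1 ≤ pq.2 ∧
      y ^ ((2:ℝ)/n) *
        (∑ i, ((pq.1 i : ℝ) - (pq.2 : ℝ) * (x₀ i + (N:ℝ)⁻¹ * (j i : ℝ))) ^ 2)
        + (pq.2 : ℝ) ^ 2 / y ^ 2 ≤ R ^ 2} ⊆ ↑(G j) := by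
    intro j pq hpq
    obtain ⟨-, hq1, hineq⟩ := hpq
    set p := pq.1
    set q := pq.2
    have hq0 : (0:ℝ) < (q:ℝ) := by exact_mod_cast hq1
    have hy2n : (0:ℝ) < y ^ ((2:ℝ)/(n:ℝ)) := by positivity
    have hsum0 : (0:ℝ) ≤ ∑ i, ((p i : ℝ) - (q : ℝ) * (x₀ i + (N:ℝ)⁻¹ * (j i : ℝ))) ^ 2 :=
      Finset.sum_nonneg fun i _ => sq_nonneg _
    -- q ≤ yR
    have hqyR : (q:ℝ) ≤ y*R := by
      have h1 : (q:ℝ)^2 / y^2 ≤ R^2 := by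
        have := mul_nonneg hy2n.le hsum0
        linarith
      have h2 : (q:ℝ)^2 ≤ R^2 * y^2 := by
        rw [div_le_iff₀ (by positivity : (0:ℝ) < y^2)] at h1
        exact h1
      nlinarith [mul_pos hy0 hR0]
    have hqQ : q ≤ Q := Int.le_floor.mpr hqyR
    -- coordinates
    have hcoord : ∀ i : Fin n, p i ∈ Finset.Icc
        ⌈(q:ℝ)*(x₀ i) + (q:ℝ)*((j i):ℝ)/(N:ℝ) - r⌉ ⌊(q:ℝ)*(x₀ i) + (q:ℝ)*((j i):ℝ)/(N:ℝ) + r⌋ := by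
      intro i
      have hterm : ((p i : ℝ) - (q : ℝ) * (x₀ i + (N:ℝ)⁻¹ * (j i : ℝ)))^2 ≤
          ∑ i', ((p i' : ℝ) - (q : ℝ) * (x₀ i' + (N:ℝ)⁻¹ * (j i' : ℝ))) ^ 2 :=
        Finset.single_le_sum (f := fun i' => ((p i' : ℝ) - (q : ℝ) * (x₀ i' + (N:ℝ)⁻¹ * (j i' : ℝ)))^2)
          (fun i' _ => sq_nonneg _) (Finset.mem_univ i)
      have hd2 : ((p i : ℝ) - (q : ℝ) * (x₀ i + (N:ℝ)⁻¹ * (j i : ℝ)))^2 ≤ r^2 := by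
        have hq2y : (0:ℝ) ≤ (q:ℝ)^2 / y^2 := by positivity
        have h3 : y ^ ((2:ℝ)/(n:ℝ)) * ((p i : ℝ) - (q : ℝ) * (x₀ i + (N:ℝ)⁻¹ * (j i : ℝ)))^2
            ≤ y ^ ((2:ℝ)/(n:ℝ)) * r^2 := by
          have h4 := mul_le_mul_of_nonneg_left hterm hy2n.le
          have h5 : y ^ ((2:ℝ)/(n:ℝ)) * r^2 = R^2 := by rw [mul_comm]; exact hr2
          linarith
        exact le_of_mul_le_mul_left h3 hy2n
      have heq : (q : ℝ) * (x₀ i + (N:ℝ)⁻¹ * (j i : ℝ)) = (q:ℝ)*(x₀ i) + (q:ℝ)*((j i):ℝ)/(N:ℝ) := by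
        field_simp
      set d := ((p i : ℝ) - (q : ℝ) * (x₀ i + (N:ℝ)⁻¹ * (j i : ℝ))) with hddef
      have hdlo : -r ≤ d := by nlinarith [sq_nonneg (d + r)]
      have hdhi : d ≤ r := by nlinarith [sq_nonneg (d - r)]
      rw [Finset.mem_Icc]
      constructor
      · apply Int.ceil_le.mpr
        rw [← heq]
        have : (q : ℝ) * (x₀ i + (N:ℝ)⁻¹ * (j i : ℝ)) = (p i : ℝ) - d := by rw [hddef]; ring
        rw [this]
        linarith
      · apply Int.le_floor.mpr
        rw [← heq]
        have : (q : ℝ) * (x₀ i + (N:ℝ)⁻¹ * (j i : ℝ)) = (p i : ℝ) - d := by rw [hddef]; ring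
        rw [this]
        linarith
    simp only [hGdef, Finset.coe_biUnion, Set.mem_iUnion, Finset.mem_coe, Finset.mem_Icc]
    refine ⟨q, ⟨hq1, hqQ⟩, ?_⟩
    rw [Finset.mem_product, Finset.mem_singleton]
    exact ⟨Fintype.mem_piFinset.mpr hcoord, rfl⟩
  -- encard bound
  have hencard : ∀ j : Fin n → ℤ, (Set.encard {pq : (Fin n → ℤ) × ℤ | IsPrimitivePair pq.1 pq.2 ∧ 1 ≤ pq.2 ∧
      y ^ ((2:ℝ)/n) *
        (∑ i, ((pq.1 i : ℝ) - (pq.2 : ℝ) * (x₀ i + (N:ℝ)⁻¹ * (j i : ℝ))) ^ 2)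
        + (pq.2 : ℝ) ^ 2 / y ^ 2 ≤ R ^ 2}) ≤ (((G j).card : ℕ) : ℝ≥0∞) := by
    intro j
    have h := Set.encard_mono (hsub j)
    rw [Set.encard_coe_eq_coe_finsetCard] at h
    exact_mod_cast h
  -- the real-number main estimate
  have hreal : ((∑ j ∈ Finset.Icc (0 : Fin n → ℤ) (fun _ => (N : ℤ)), (G j).card : ℕ) : ℝ)
      ≤ (N:ℝ)^n * ((16^n * (1 + (c^n)⁻¹)) * R ^ (n + 1)) := by
    push_cast
    have step1 : ∀ j : Fin n → ℤ, ((G j).card : ℝ) ≤ ∑ q ∈ Finset.Icc (1:ℤ) Q, ((P q j).card : ℝ) := by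
      intro j
      simp only [hGdef]
      calc (((Finset.Icc 1 Q).biUnion fun q => (P q j) ×ˢ {q}).card : ℝ)
          ≤ ((∑ q ∈ Finset.Icc (1:ℤ) Q, ((P q j) ×ˢ ({q} : Finset ℤ)).card : ℕ) : ℝ) := by
            exact_mod_cast Finset.card_biUnion_le
        _ = ∑ q ∈ Finset.Icc (1:ℤ) Q, ((P q j).card : ℝ) := by
            push_cast
            refine Finset.sum_congr rfl fun q _ => ?_
            rw [Finset.card_product, Finset.card_singleton, mul_one]
    refine le_trans (Finset.sum_le_sum fun j _ => step1 j) ?_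
    rw [Finset.sum_comm]
    have step2 : ∀ q ∈ Finset.Icc (1:ℤ) Q,
        (∑ j ∈ Finset.Icc (0 : Fin n → ℤ) (fun _ => (N : ℤ)), ((P q j).card : ℝ))
          ≤ 16^n * (r^n * (N:ℝ)^n + (q:ℝ)^n) := by
      intro q hq
      rw [Finset.mem_Icc] at hq
      obtain ⟨hq1, hqQ⟩ := hq
      have hq0 : (0:ℝ) < (q:ℝ) := by exact_mod_cast hq1
      have e1 : (∑ j ∈ Finset.Icc (0 : Fin n → ℤ) (fun _ => (N : ℤ)), ((P q j).card : ℝ))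
          = ∏ i : Fin n, ∑ t ∈ Finset.Icc (0:ℤ) (N:ℤ),
              ((Finset.Icc ⌈(q:ℝ)*(x₀ i) + (q:ℝ)*((t):ℝ)/(N:ℝ) - r⌉
                ⌊(q:ℝ)*(x₀ i) + (q:ℝ)*((t):ℝ)/(N:ℝ) + r⌋).card : ℝ) := by
        rw [Finset.prod_univ_sum, Pi.Icc_eq]
        refine Finset.sum_congr rfl fun j _ => ?_
        simp only [hPdef, Fintype.card_piFinset]
        push_cast
        rfl
      rw [e1]
      have hB0 : (0:ℝ) ≤ ((q:ℝ) + 2*r + 1) * (2*r*(N:ℝ)/(q:ℝ) + 1) := by positivity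
      calc (∏ i : Fin n, ∑ t ∈ Finset.Icc (0:ℤ) (N:ℤ),
              ((Finset.Icc ⌈(q:ℝ)*(x₀ i) + (q:ℝ)*((t):ℝ)/(N:ℝ) - r⌉
                ⌊(q:ℝ)*(x₀ i) + (q:ℝ)*((t):ℝ)/(N:ℝ) + r⌋).card : ℝ))
          ≤ ∏ _i : Fin n, ((q:ℝ) + 2*r + 1) * (2*r*(N:ℝ)/(q:ℝ) + 1) := by
            refine Finset.prod_le_prod (fun i _ => ?_) (fun i _ => ?_)
            · exact Finset.sum_nonneg fun t _ => by positivity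
            · exact aux_coord N hN q hq1 ((q:ℝ)*(x₀ i)) r hr0.le
        _ = (((q:ℝ) + 2*r + 1) * (2*r*(N:ℝ)/(q:ℝ) + 1))^n := by
            rw [Finset.prod_const, Finset.card_univ, Fintype.card_fin]
        _ ≤ (8*r*(N:ℝ) + 4*(q:ℝ))^n := by
            apply pow_le_pow_left₀ hB0
            have hq4 : (q:ℝ) + 2*r + 1 ≤ 4*(q:ℝ) := by
              have : (1:ℝ) ≤ (q:ℝ) := by exact_mod_cast hq1
              linarith
            have hpos : (0:ℝ) < 2*r*(N:ℝ)/(q:ℝ) + 1 := by positivity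
            have h4 : ((q:ℝ) + 2*r + 1) * (2*r*(N:ℝ)/(q:ℝ) + 1) ≤
                (4*(q:ℝ)) * (2*r*(N:ℝ)/(q:ℝ) + 1) :=
              mul_le_mul_of_nonneg_right hq4 hpos.le
            have h5 : (4*(q:ℝ)) * (2*r*(N:ℝ)/(q:ℝ) + 1) = 8*r*(N:ℝ) + 4*(q:ℝ) := by
              field_simp
              ring
            linarith
        _ ≤ 2^n * ((8*r*(N:ℝ))^n + (4*(q:ℝ))^n) :=
            aux_add_pow_le n _ _ (by positivity) (by positivity)
        _ ≤ 16^n * (r^n * (N:ℝ)^n + (q:ℝ)^n) := by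
            have e8 : (8*r*(N:ℝ))^n = 8^n * (r^n * (N:ℝ)^n) := by
              rw [mul_pow, mul_pow]; ring
            have e4 : (4*(q:ℝ))^n = 4^n * (q:ℝ)^n := by rw [mul_pow]
            have e28 : (2:ℝ)^n * 8^n = 16^n := by rw [← mul_pow]; norm_num
            have e24 : (2:ℝ)^n * 4^n = 8^n := by rw [← mul_pow]; norm_num
            have h816 : (8:ℝ)^n ≤ 16^n := pow_le_pow_left₀ (by norm_num) (by norm_num) n
            have hqn0 : (0:ℝ) ≤ (q:ℝ)^n := by positivity
            have hrNn0 : (0:ℝ) ≤ r^n * (N:ℝ)^n := by positivity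
            calc 2^n * ((8*r*(N:ℝ))^n + (4*(q:ℝ))^n)
                = 16^n * (r^n * (N:ℝ)^n) + 8^n * (q:ℝ)^n := by
                  have hx : (2:ℝ)^n * ((8^n * (r^n * (N:ℝ)^n)) + (4^n * (q:ℝ)^n))
                      = (2^n*8^n)*(r^n*(N:ℝ)^n) + (2^n*4^n)*((q:ℝ)^n) := by ring
                  rw [e8, e4, hx, e28, e24]
              _ ≤ 16^n * (r^n * (N:ℝ)^n) + 16^n * (q:ℝ)^n := by nlinarith
              _ = 16^n * (r^n * (N:ℝ)^n + (q:ℝ)^n) := by ring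
    refine le_trans (Finset.sum_le_sum step2) ?_
    -- final summation over q
    have hcard : ((Finset.Icc (1:ℤ) Q).card : ℝ) ≤ y*R := by
      have hyR0 : (0:ℝ) ≤ y*R := by positivity
      have h := aux_card_Icc_le 1 Q 1 (y*R) (by norm_num) hQle (by linarith)
      linarith
    have hcard0 : (0:ℝ) ≤ ((Finset.Icc (1:ℤ) Q).card : ℝ) := by positivity
    have hqn : ∀ q ∈ Finset.Icc (1:ℤ) Q, (q:ℝ)^n ≤ (y*R)^n := by
      intro q hq
      rw [Finset.mem_Icc] at hq
      have h1 : (0:ℝ) ≤ (q:ℝ) := by exact_mod_cast le_trans zero_le_one hq.1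
      have h2 : (q:ℝ) ≤ y*R := le_trans (by exact_mod_cast hq.2) hQle
      exact pow_le_pow_left₀ h1 h2 n
    have hyR0 : (0:ℝ) ≤ y*R := by positivity
    have hrNn0 : (0:ℝ) ≤ r^n * (N:ℝ)^n := by positivity
    have hyRn0 : (0:ℝ) ≤ (y*R)^n := by positivity
    calc ∑ q ∈ Finset.Icc (1:ℤ) Q, (16:ℝ)^n * (r^n * (N:ℝ)^n + (q:ℝ)^n)
        ≤ ∑ q ∈ Finset.Icc (1:ℤ) Q, (16:ℝ)^n * (r^n * (N:ℝ)^n + (y*R)^n) := by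
          refine Finset.sum_le_sum fun q hq => ?_
          have := hqn q hq
          have h16 : (0:ℝ) ≤ (16:ℝ)^n := by positivity
          nlinarith
      _ = ((Finset.Icc (1:ℤ) Q).card : ℝ) * ((16:ℝ)^n * (r^n * (N:ℝ)^n + (y*R)^n)) := by
          rw [Finset.sum_const, nsmul_eq_mul]
      _ ≤ (y*R) * ((16:ℝ)^n * (r^n * (N:ℝ)^n + (y*R)^n)) := by
          have h16 : (0:ℝ) ≤ (16:ℝ)^n * (r^n * (N:ℝ)^n + (y*R)^n) := by positivity
          exact mul_le_mul_of_nonneg_right hcard h16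
      _ = (16:ℝ)^n * ((y*R*r^n) * (N:ℝ)^n + (y*R)^(n+1)) := by
          rw [pow_succ]
          ring
      _ ≤ (N:ℝ)^n * ((16^n * (1 + (c^n)⁻¹)) * R ^ (n + 1)) := by
          have eA : y*R*r^n = R^(n+1) := by
            rw [pow_succ]
            linear_combination R * hrn
          have eB : (y*R)^(n+1) = y^(n+1) * R^(n+1) := by rw [mul_pow]
          have hRn10 : (0:ℝ) ≤ R^(n+1) := by positivity
          have hBle : (y*R)^(n+1) ≤ (c^n)⁻¹ * (N:ℝ)^n * R^(n+1) := by
            rw [eB]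
            exact mul_le_mul_of_nonneg_right hyn1 hRn10
          have h16 : (0:ℝ) ≤ (16:ℝ)^n := by positivity
          calc (16:ℝ)^n * ((y*R*r^n) * (N:ℝ)^n + (y*R)^(n+1))
              = 16^n * (R^(n+1) * (N:ℝ)^n) + 16^n * ((y*R)^(n+1)) := by rw [eA]; ring
            _ ≤ 16^n * (R^(n+1) * (N:ℝ)^n) + 16^n * ((c^n)⁻¹ * (N:ℝ)^n * R^(n+1)) := by
                have := mul_le_mul_of_nonneg_left hBle h16
                linarith
            _ = (N:ℝ)^n * ((16^n * (1 + (c^n)⁻¹)) * R ^ (n + 1)) := by ring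
  -- assemble in ℝ≥0∞
  have hNtop : ((N : ℝ≥0∞) ^ n) ≠ ⊤ := ENNReal.pow_ne_top (ENNReal.natCast_ne_top N)
  have hNn0 : ((N : ℝ≥0∞) ^ n) ≠ 0 := by
    apply pow_ne_zero
    simp only [ne_eq, Nat.cast_eq_zero]
    omega
  calc ((N : ℝ≥0∞) ^ n)⁻¹ *
        ∑ j ∈ Finset.Icc (0 : Fin n → ℤ) (fun _ => (N : ℤ)),
          ((Set.encard {pq : (Fin n → ℤ) × ℤ | IsPrimitivePair pq.1 pq.2 ∧ 1 ≤ pq.2 ∧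
              y ^ ((2:ℝ)/n) *
                (∑ i, ((pq.1 i : ℝ) - (pq.2 : ℝ) * (x₀ i + (N:ℝ)⁻¹ * (j i : ℝ))) ^ 2)
                + (pq.2 : ℝ) ^ 2 / y ^ 2 ≤ R ^ 2} : ℝ≥0∞))
      ≤ ((N : ℝ≥0∞) ^ n)⁻¹ *
        ∑ j ∈ Finset.Icc (0 : Fin n → ℤ) (fun _ => (N : ℤ)), (((G j).card : ℕ) : ℝ≥0∞) := by
        gcongr with j hj
        exact hencard j
    _ = ((N : ℝ≥0∞) ^ n)⁻¹ *
        (((∑ j ∈ Finset.Icc (0 : Fin n → ℤ) (fun _ => (N : ℤ)), (G j).card : ℕ)) : ℝ≥0∞) := by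
        rw [Nat.cast_sum]
    _ ≤ ((N : ℝ≥0∞) ^ n)⁻¹ *
        ENNReal.ofReal ((N:ℝ)^n * ((16^n * (1 + (c^n)⁻¹)) * R ^ (n + 1))) := by
        gcongr
        rw [← ENNReal.ofReal_natCast]
        exact ENNReal.ofReal_le_ofReal hreal
    _ = ENNReal.ofReal ((16^n * (1 + (c^n)⁻¹)) * R ^ (n + 1)) := by
        rw [ENNReal.ofReal_mul (by positivity : (0:ℝ) ≤ (N:ℝ)^n),
          ENNReal.ofReal_pow (by positivity), ENNReal.ofReal_natCast,
          ← mul_assoc, ENNReal.inv_mul_cancel hNn0 hNtop, one_mul]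
end

section
/- Let n ≥ 1. There exist constants C > 0 and Q₀ ≥ 1 such that for all Q ≥ Q₀ and all s ∈ (0,1], the Lebesgue measure of { x ∈ [0,1]ⁿ : dist(x, F_Q) ≤ s·σ_Q^{−1/n} } is at most C·sⁿ, where σ_Q = Q^{n+1}/((n+1)·ζ(n+1)). -/
open MeasureTheory Set

/-- The set of `n`-dimensional Farey fractions of level `Q`. -/
def fareyN (n : ℕ) (Q : ℝ) : Set (Fin n → ℝ) :=
  {r | (∀ i, r i ∈ Ico (0:ℝ) 1) ∧ ∃ p : Fin n → ℤ, ∃ q : ℤ,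
    IsPrimitivePair p q ∧ 0 < q ∧ (q : ℝ) ≤ Q ∧ ∀ i, r i = (p i : ℝ) / (q : ℝ)}

/-- The Euclidean distance on the torus `ℝⁿ/ℤⁿ` from `x` to the Farey set `F_Q`. -/
noncomputable def fareyDist (n : ℕ) (Q : ℝ) (x : Fin n → ℝ) : ℝ :=
  sInf {d | ∃ r ∈ fareyN n Q, ∃ m : Fin n → ℤ,
    d = Real.sqrt (∑ i, (x i - r i - (m i : ℝ)) ^ 2)}

/-- The value `ζ(m)` of the Riemann zeta function at an integer `m ≥ 2`. -/
noncomputable def zetaVal (m : ℕ) : ℝ := ∑' k : ℕ, 1 / ((k : ℝ) + 1) ^ m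

/-- The normalisation `σ_Q = Q^{n+1}/((n+1) ζ(n+1))`. -/
noncomputable def sigmaQ (n : ℕ) (Q : ℝ) : ℝ := Q ^ (n + 1) / ((n + 1) * zetaVal (n + 1))

lemma zetaVal_pos (m : ℕ) (hm : 2 ≤ m) : 0 < zetaVal m := by
  have h0 : Summable (fun k : ℕ => 1 / ((k : ℝ)) ^ m) :=
    Real.summable_one_div_nat_pow.2 (by omega)
  have hsum : Summable (fun k : ℕ => 1 / ((k : ℝ) + 1) ^ m) := by
    have := (summable_nat_add_iff (f := fun k : ℕ => 1 / ((k : ℝ)) ^ m) 1).2 h0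
    simpa using this
  exact Summable.tsum_pos hsum (fun i => by positivity) 0 (by norm_num)

lemma prim_zero_one (n : ℕ) : IsPrimitivePair (fun _ : Fin n => (0:ℤ)) 1 := by
  unfold IsPrimitivePair
  have hdvd : Finset.univ.gcd (Fin.snoc (fun _ : Fin n => (0:ℤ)) 1 : Fin (n+1) → ℤ) ∣ 1 := by
    have := Finset.gcd_dvd (f := (Fin.snoc (fun _ : Fin n => (0:ℤ)) 1 : Fin (n+1) → ℤ))
      (Finset.mem_univ (Fin.last n))
    simpa [Fin.snoc_last] using this
  rcases Int.isUnit_iff.1 (isUnit_of_dvd_one hdvd) with h | h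
  · exact h
  · exfalso
    have hnorm := Finset.normalize_gcd (s := (Finset.univ : Finset (Fin (n+1))))
      (f := (Fin.snoc (fun _ : Fin n => (0:ℤ)) 1 : Fin (n+1) → ℤ))
    rw [h, show normalize (-1:ℤ) = 1 from rfl] at hnorm
    norm_num at hnorm

set_option maxHeartbeats 1000000 in
theorem stmt16 (n : ℕ) (hn : 1 ≤ n) :
    ∃ C > 0, ∃ Q₀ : ℝ, 1 ≤ Q₀ ∧ ∀ Q : ℝ, Q₀ ≤ Q → ∀ s : ℝ, s ∈ Ioc (0:ℝ) 1 →
      (volume {x : Fin n → ℝ | x ∈ Icc 0 1 ∧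
          fareyDist n Q x ≤ s * sigmaQ n Q ^ (-(1:ℝ)/n)}).toReal
        ≤ C * s ^ n := by
  have hζpos : 0 < zetaVal (n+1) := zetaVal_pos (n+1) (by omega)
  have hnζ : 0 < ((n:ℝ)+1) * zetaVal (n+1) := by positivity
  refine ⟨28^n * (((n:ℝ)+1) * zetaVal (n+1)), by positivity,
    max 1 (((n:ℝ)+1) * zetaVal (n+1)), le_max_left _ _, ?_⟩
  intro Q hQ s hs
  obtain ⟨hs0, hs1⟩ := hs
  have hQ1 : (1:ℝ) ≤ Q := le_trans (le_max_left _ _) hQ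
  have hQζ : ((n:ℝ)+1) * zetaVal (n+1) ≤ Q := le_trans (le_max_right _ _) hQ
  have hQpow : Q ≤ Q^(n+1) := le_self_pow₀ (by linarith) (by omega)
  have hQpowpos : 0 < Q^(n+1) := by positivity
  have hσdef : sigmaQ n Q = Q^(n+1) / (((n:ℝ)+1) * zetaVal (n+1)) := rfl
  have hσ1 : 1 ≤ sigmaQ n Q := by
    rw [hσdef, le_div_iff₀ hnζ]; linarith
  have hσpos : 0 < sigmaQ n Q := lt_of_lt_of_le one_pos hσ1
  set ρ : ℝ := s * sigmaQ n Q ^ (-(1:ℝ)/n) with hρ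
  have hρpos : 0 < ρ := mul_pos hs0 (Real.rpow_pos_of_pos hσpos _)
  have hρ1 : ρ ≤ 1 := by
    have h1 : sigmaQ n Q ^ (-(1:ℝ)/n) ≤ 1 :=
      Real.rpow_le_one_of_one_le_of_nonpos hσ1
        (by rw [div_nonpos_iff]; right; exact ⟨by norm_num, Nat.cast_nonneg n⟩)
    calc ρ ≤ 1 * 1 := mul_le_mul hs1 h1 (Real.rpow_pos_of_pos hσpos _).le one_pos.le
      _ = 1 := one_mul 1
  have hρn : ρ ^ n = s ^ n / sigmaQ n Q := by
    have h1 : (sigmaQ n Q ^ (-(1:ℝ)/n)) ^ n = sigmaQ n Q ^ ((-(1:ℝ)/n) * n) := by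
      rw [← Real.rpow_natCast (sigmaQ n Q ^ (-(1:ℝ)/n)) n, ← Real.rpow_mul hσpos.le]
    have hn0 : (n:ℝ) ≠ 0 := by positivity
    have h2 : (-(1:ℝ)/n) * n = -1 := by field_simp
    rw [hρ, mul_pow, h1, h2, Real.rpow_neg_one, div_eq_mul_inv]
  set N : ℤ := ⌊Q⌋ with hNdef
  have hN1 : 1 ≤ N := by
    rw [hNdef]; exact_mod_cast Int.le_floor.2 (by exact_mod_cast hQ1)
  have hNQ : (N:ℝ) ≤ Q := Int.floor_le Q
  set I : Finset (ℤ × (Fin n → ℤ) × (Fin n → ℤ)) :=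
    (Finset.Icc 1 N) ×ˢ (Fintype.piFinset fun _ => Finset.Ico 0 N) ×ˢ
      (Fintype.piFinset fun _ => Finset.Icc (-3) 3) with hI
  set B : ℤ × (Fin n → ℤ) × (Fin n → ℤ) → Set (Fin n → ℝ) :=
    fun t => Set.pi Set.univ (fun i =>
      Icc (((t.2.1 i : ℝ) / (t.1 : ℝ) + (t.2.2 i : ℝ)) - 2*ρ)
          (((t.2.1 i : ℝ) / (t.1 : ℝ) + (t.2.2 i : ℝ)) + 2*ρ)) with hB
  -- Inclusion
  have hsub : {x : Fin n → ℝ | x ∈ Icc 0 1 ∧ fareyDist n Q x ≤ ρ} ⊆ ⋃ t ∈ I, B t := by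
    rintro x ⟨hx01, hxd⟩
    have hx0 : ∀ i, 0 ≤ x i := fun i => hx01.1 i
    have hx1 : ∀ i, x i ≤ 1 := fun i => hx01.2 i
    set D := {d | ∃ r ∈ fareyN n Q, ∃ m : Fin n → ℤ,
      d = Real.sqrt (∑ i, (x i - r i - (m i : ℝ)) ^ 2)} with hD
    have hDne : D.Nonempty := by
      refine ⟨Real.sqrt (∑ i, (x i - 0 - ((0:ℤ) : ℝ)) ^ 2), (fun _ => 0), ?_, 0, by norm_num⟩
      refine ⟨fun i => by norm_num, fun _ => 0, 1, prim_zero_one n, one_pos, by exact_mod_cast hQ1,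
        fun i => by norm_num⟩
    have hDbdd : BddBelow D := by
      refine ⟨0, ?_⟩
      rintro d ⟨r, _, m, rfl⟩
      exact Real.sqrt_nonneg _
    obtain ⟨d, hdD, hdlt⟩ := (Real.sInf_le_iff hDbdd hDne).1 hxd ρ hρpos
    obtain ⟨r, hrF, m, hdeq⟩ := hdD
    obtain ⟨hr01, p, q, hprim, hq0, hqQ, hrpq⟩ := hrF
    have hcoord : ∀ i, |x i - r i - (m i : ℝ)| ≤ 2*ρ := by
      intro i
      have h1 : (x i - r i - (m i : ℝ))^2 ≤ ∑ j, (x j - r j - (m j : ℝ))^2 :=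
        Finset.single_le_sum (f := fun j => (x j - r j - (m j : ℝ))^2)
          (fun j _ => sq_nonneg _) (Finset.mem_univ i)
      have h2 : |x i - r i - (m i : ℝ)| ≤ d := by
        rw [hdeq, ← Real.sqrt_sq_eq_abs]
        exact Real.sqrt_le_sqrt h1
      linarith
    have hqr : (0:ℝ) < (q:ℝ) := by exact_mod_cast hq0
    refine mem_biUnion (show ((q, p, m) : ℤ × (Fin n → ℤ) × (Fin n → ℤ)) ∈ I from ?_) ?_
    · rw [hI]
      refine Finset.mem_product.2 ⟨Finset.mem_Icc.2 ⟨hq0, Int.le_floor.2 hqQ⟩,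
        Finset.mem_product.2 ⟨Fintype.mem_piFinset.2 fun i => ?_, Fintype.mem_piFinset.2 fun i => ?_⟩⟩
      · -- p i ∈ Ico 0 N
        have hri := hr01 i
        have hlow : (0:ℝ) ≤ (p i : ℝ) := by
          have := hri.1
          rw [hrpq i] at this
          exact (div_nonneg_iff.1 this).resolve_right (fun h => absurd h.2 (not_le.2 hqr)) |>.1
        have hhigh : (p i : ℝ) < (q:ℝ) := by
          have := hri.2
          rw [hrpq i, div_lt_one hqr] at this
          exact this
        have hp0 : (0:ℤ) ≤ p i := by exact_mod_cast hlow
        have hpq : p i < q := by exact_mod_cast hhigh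
        exact Finset.mem_Ico.2 ⟨hp0, lt_of_lt_of_le hpq (Int.le_floor.2 hqQ)⟩
      · -- m i ∈ Icc (-3) 3
        have hci := hcoord i
        have hri := hr01 i
        have h2ρ : 2*ρ ≤ 2 := by linarith
        have habs := abs_le.1 hci
        have hm3 : (-3:ℝ) ≤ (m i : ℝ) ∧ ((m i : ℝ)) ≤ 3 := by
          constructor <;> nlinarith [hx0 i, hx1 i, hri.1, hri.2]
        exact Finset.mem_Icc.2 ⟨by exact_mod_cast hm3.1, by exact_mod_cast hm3.2⟩
    · simp only [hB]
      refine Set.mem_pi.2 fun i _ => ?_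
      have hci := abs_le.1 (hcoord i)
      rw [hrpq i] at hci
      rw [Set.mem_Icc]
      exact ⟨by linarith [hci.1], by linarith [hci.2]⟩
  -- Volume of each box
  have hvol : ∀ t, volume (B t) = (ENNReal.ofReal (4*ρ))^n := by
    intro t
    simp only [hB]
    rw [volume_pi_pi]
    have : ∀ (c : ℝ), volume (Icc (c - 2*ρ) (c + 2*ρ)) = ENNReal.ofReal (4*ρ) := by
      intro c
      rw [Real.volume_Icc]
      congr 1
      ring
    simp only [this, Finset.prod_const, Finset.card_univ, Fintype.card_fin]
  -- Measure bound
  have hle : volume {x : Fin n → ℝ | x ∈ Icc 0 1 ∧ fareyDist n Q x ≤ ρ}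
      ≤ (I.card : ENNReal) * (ENNReal.ofReal (4*ρ))^n := by
    calc volume {x : Fin n → ℝ | x ∈ Icc 0 1 ∧ fareyDist n Q x ≤ ρ}
        ≤ volume (⋃ t ∈ I, B t) := measure_mono hsub
      _ ≤ ∑ t ∈ I, volume (B t) := measure_biUnion_finset_le I B
      _ = (I.card : ENNReal) * (ENNReal.ofReal (4*ρ))^n := by
          simp [hvol, Finset.sum_const, nsmul_eq_mul]
  have hcard : (I.card : ℝ) = (N.toNat : ℝ) * ((N.toNat : ℝ)^n * 7^n) := by
    rw [hI]
    simp [Finset.card_product, Fintype.card_piFinset, Int.card_Icc, Int.card_Ico]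
  have hfin : (I.card : ENNReal) * (ENNReal.ofReal (4*ρ))^n ≠ ⊤ :=
    ENNReal.mul_ne_top (ENNReal.natCast_ne_top _) (ENNReal.pow_ne_top ENNReal.ofReal_ne_top)
  have htoReal := ENNReal.toReal_mono hfin hle
  rw [ENNReal.toReal_mul, ENNReal.toReal_pow, ENNReal.toReal_ofReal (by positivity),
    show ((I.card : ENNReal)).toReal = (I.card : ℝ) from rfl] at htoReal
  refine le_trans htoReal ?_
  -- final arithmetic
  have hNtoQ : ((N.toNat : ℝ)) ≤ Q := by
    have h0 : (N.toNat : ℤ) = N := by omega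
    calc ((N.toNat : ℝ)) = ((N : ℝ)) := by exact_mod_cast congrArg (fun z : ℤ => (z : ℝ)) h0
      _ ≤ Q := hNQ
  have hNn : (0:ℝ) ≤ (N.toNat : ℝ) := Nat.cast_nonneg _
  have hmain : (I.card : ℝ) * (4*ρ)^n ≤ Q^(n+1) * (7^n * (4^n * ρ^n)) := by
    rw [hcard, mul_pow]
    have h1 : (N.toNat:ℝ) * ((N.toNat:ℝ)^n * 7^n) * ((4:ℝ)^n * ρ^n)
        = ((N.toNat:ℝ) * (N.toNat:ℝ)^n) * (7^n * (4^n * ρ^n)) := by ring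
    rw [h1]
    have h2 : ((N.toNat:ℝ) * (N.toNat:ℝ)^n) ≤ Q^(n+1) := by
      rw [pow_succ]
      calc (N.toNat:ℝ) * (N.toNat:ℝ)^n ≤ Q * Q^n := by
            apply mul_le_mul hNtoQ (pow_le_pow_left₀ hNn hNtoQ n) (by positivity) (by linarith)
        _ = Q^(n+1) := by ring
    apply mul_le_mul_of_nonneg_right h2 (by positivity)
  refine le_trans hmain ?_
  rw [hρn]
  have heq : Q^(n+1) * (7^n * ((4:ℝ)^n * (s^n / sigmaQ n Q)))
      = 28^n * (((n:ℝ)+1) * zetaVal (n+1)) * s^n := by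
    have h28 : (28:ℝ)^n = 7^n * 4^n := by rw [← mul_pow]; norm_num
    rw [hσdef, h28]
    field_simp
  rw [heq]
end
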